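/- Let P be a finite poset such that I(P) is regular hyper-planar, with canonical chain decomposition C_1 \cup ... \cup C_d. Then (b) rank P = max{\ell(C_1), ..., \ell(C_d)}, and (c) for every index i with \ell(C_i) = rank P and every x \in C_i, one has height(x) + depth(x) = rank \hat{P}, where height and depth are computed in \hat{P}. -/

import Mathlib

open Classical

/-- `Hat P` is the poset `P` with a new least element `-∞ = ⊥` and a new
greatest element `∞ = ⊤` adjoined. -/
abbrev Hat (P : Type*) := WithBot (WithTop P)

/-- The canonical inclusion of `P` into `Hat P`. -/
def toHat {P : Type*} (x : P) : Hat P := ((x : WithTop P) : WithBot (WithTop P))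

/-- The rank of a poset: the maximal length (number of covering steps) of a
chain, encoded as the maximal `n` admitting a strictly increasing sequence of
`n + 1` elements. -/
noncomputable def rankN (Q : Type*) [Preorder Q] : ℕ :=
  sSup {n : ℕ | ∃ f : Fin (n + 1) → Q, StrictMono f}

/-- The height of `x` in a poset `Q`: the rank of the subposet `{y | y ≤ x}`. -/
noncomputable def heightN {Q : Type*} [Preorder Q] (x : Q) : ℕ :=
  sSup {n : ℕ | ∃ f : Fin (n + 1) → Q, StrictMono f ∧ ∀ i, f i ≤ x}

/-- The depth of `x` in a poset `Q`: the rank of the subposet `{y | x ≤ y}`. -/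
noncomputable def depthN {Q : Type*} [Preorder Q] (x : Q) : ℕ :=
  sSup {n : ℕ | ∃ f : Fin (n + 1) → Q, StrictMono f ∧ ∀ i, x ≤ f i}

/-- `v` belongs to `S(P)`: `v : Hat P → ℕ` is order-reversing with `v ∞ = 0`. -/
def memS (P : Type*) [PartialOrder P] (v : Hat P → ℕ) : Prop :=
  v ⊤ = 0 ∧ ∀ p q : Hat P, p ≤ q → v q ≤ v p

/-- `v` belongs to `T(P)`: `v : Hat P → ℕ` is strictly order-reversing with
`v ∞ = 0`. -/
def memT (P : Type*) [PartialOrder P] (v : Hat P → ℕ) : Prop :=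
  v ⊤ = 0 ∧ ∀ p q : Hat P, p < q → v q < v p

/-- The partial order of `T(P)`: `v ≥ w` iff `v` dominates `w` pointwise and the
pointwise difference `v - w` is order-reversing. -/
def Tge (P : Type*) [PartialOrder P] (v w : Hat P → ℕ) : Prop :=
  (∀ p : Hat P, w p ≤ v p) ∧ ∀ p q : Hat P, p ≤ q → v q - w q ≤ v p - w p

/-- `v` is a minimal element of the poset `T(P)`. -/
def IsMinT (P : Type*) [PartialOrder P] (v : Hat P → ℕ) : Prop :=
  memT P v ∧ ∀ w : Hat P → ℕ, memT P w → Tge P v w → w = v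

/-- A poset is pure if all its maximal chains have the same length, equivalently
the same cardinality. -/
def IsPure (P : Type*) [PartialOrder P] : Prop :=
  ∀ C D : Set P, IsMaxChain (· ≤ ·) C → IsMaxChain (· ≤ ·) D → C.ncard = D.ncard

/-- The height of `x` inside a chain `C`: the number of elements of `C`
strictly below `x`. -/
noncomputable def heightC {P : Type*} [PartialOrder P] (C : Set P) (x : P) : ℕ :=
  {z ∈ C | z < x}.ncard

/-- A canonical chain decomposition of `P`: a partition of `P` into chains,
each of which is a maximal chain of `P`. -/
def IsCCD {P : Type*} [PartialOrder P] {d : ℕ} (C : Fin d → Set P) : Prop :=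
  (∀ i, IsMaxChain (· ≤ ·) (C i)) ∧
  (∀ i j, i ≠ j → Disjoint (C i) (C j)) ∧
  (⋃ i, C i) = Set.univ

/-- The lattice of lower sets of `P` is regular hyper-planar: `P` admits a
canonical chain decomposition and, for every canonical chain decomposition and
all `x < y` with `x ∈ Cᵢ`, `y ∈ Cⱼ`, one has `height_{Cᵢ}(x) < height_{Cⱼ}(y)`. -/
def RegularHP (P : Type*) [PartialOrder P] : Prop :=
  (∃ (d : ℕ) (C : Fin d → Set P), IsCCD C) ∧
  ∀ (d : ℕ) (C : Fin d → Set P), IsCCD C →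
    ∀ (i j : Fin d) (x y : P), x ∈ C i → y ∈ C j → x < y →
      heightC (C i) x < heightC (C j) y

/-- The lattice of lower sets of `P` is regular planar: `P` admits a canonical
chain decomposition into two chains and the regularity condition holds for all
such decompositions. -/
def RegularPlanar (P : Type*) [PartialOrder P] : Prop :=
  (∃ C : Fin 2 → Set P, IsCCD C) ∧
  ∀ C : Fin 2 → Set P, IsCCD C →
    ∀ (i j : Fin 2) (x y : P), x ∈ C i → y ∈ C j → x < y →
      heightC (C i) x < heightC (C j) y

/-!
Regularity says precisely that `x ↦ height_{Cᵢ}(x)`, for `Cᵢ` the chain containing `x`, is a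
strictly monotone map `P → ℕ`. It is bounded by `max ℓ(Cᵢ)`, so no chain of `P` is longer than
that, which gives (b). For (c), a point `x` of a chain `Cᵢ` of length `rank P` cuts it into a chain
ending at `x` and one starting at `x`, so `height x + depth x ≥ rank P`; the reverse inequality holds
in every finite poset. Adjoining `-∞` and `∞` raises height and depth by one and rank by two.
-/

-- Not `open Order`: together with the ambient `open Classical` it activates the scoped instance
-- `Classical.Order.instLT`, and `<` would then elaborate differently from the `<` in `heightC`.
open Order (height coheight krullDim)

section Bridge

variable {Q : Type*} [PartialOrder Q] [Finite Q]

lemma bddAbove_length_image (S : Set (LTSeries Q)) :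
    BddAbove ((fun p : LTSeries Q => p.length) '' S) := by
  have := Fintype.ofFinite Q
  exact ⟨Fintype.card Q, by rintro _ ⟨p, -, rfl⟩; exact (LTSeries.length_lt_card p).le⟩

lemma natCast_sSup_length_image (S : Set (LTSeries Q)) :
    ((sSup ((fun p : LTSeries Q => p.length) '' S) : ℕ) : ℕ∞) = ⨆ p ∈ S, (p.length : ℕ∞) := by
  rw [ENat.natCast_sSup (bddAbove_length_image S), iSup_image]

lemma rankN_eq_iSup_length : (rankN Q : ℕ∞) = ⨆ p : LTSeries Q, (p.length : ℕ∞) := by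
  have : {n : ℕ | ∃ f : Fin (n + 1) → Q, StrictMono f} =
      (fun p : LTSeries Q => p.length) '' Set.univ := by
    ext n
    refine ⟨fun ⟨f, hf⟩ => ⟨LTSeries.mk n f hf, trivial, rfl⟩, ?_⟩
    rintro ⟨p, -, rfl⟩
    exact ⟨p, LTSeries.strictMono p⟩
  rw [rankN, this, natCast_sSup_length_image]
  simp

lemma heightN_eq_height (x : Q) : (heightN x : ℕ∞) = height x := by
  have : {n : ℕ | ∃ f : Fin (n + 1) → Q, StrictMono f ∧ ∀ i, f i ≤ x} =
      (fun p : LTSeries Q => p.length) '' {p | p.last ≤ x} := by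
    ext n
    refine ⟨fun ⟨f, hf, hx⟩ => ⟨LTSeries.mk n f hf, hx _, rfl⟩, ?_⟩
    rintro ⟨p, hp, rfl⟩
    exact ⟨p, LTSeries.strictMono p, fun i => (LTSeries.monotone p (Fin.le_last i)).trans hp⟩
  rw [heightN, this, natCast_sSup_length_image]
  rfl

lemma depthN_eq_coheight (x : Q) : (depthN x : ℕ∞) = coheight x := by
  have : {n : ℕ | ∃ f : Fin (n + 1) → Q, StrictMono f ∧ ∀ i, x ≤ f i} =
      (fun p : LTSeries Q => p.length) '' {p | x ≤ p.head} := by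
    ext n
    refine ⟨fun ⟨f, hf, hx⟩ => ⟨LTSeries.mk n f hf, hx _, rfl⟩, ?_⟩
    rintro ⟨p, hp, rfl⟩
    exact ⟨p, LTSeries.strictMono p, fun i => hp.trans (LTSeries.monotone p (Fin.zero_le i))⟩
  rw [depthN, this, natCast_sSup_length_image, Order.coheight_eq]
  rfl

lemma rankN_eq_krullDim [Nonempty Q] : ((rankN Q : ℕ∞) : WithBot ℕ∞) = krullDim Q := by
  rw [Order.krullDim_eq_iSup_length, ← rankN_eq_iSup_length]

end Bridge

section Rank

variable {Q : Type*} [PartialOrder Q] [Finite Q]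

lemma LTSeries.length_le_rankN (p : LTSeries Q) : p.length ≤ rankN Q := by
  have h := le_iSup (fun p : LTSeries Q => (p.length : ℕ∞)) p
  rw [← rankN_eq_iSup_length] at h
  exact_mod_cast h

lemma rankN_le_of_strictMono {r : ℕ} (H : Q → ℕ) (hH : StrictMono H) (hr : ∀ x, H x ≤ r) :
    rankN Q ≤ r := by
  suffices (rankN Q : ℕ∞) ≤ r by exact_mod_cast this
  rw [rankN_eq_iSup_length]
  refine iSup_le fun p => ?_
  calc (p.length : ℕ∞) ≤ height p.last := Order.length_le_height_last
    _ ≤ height (H p.last) := Order.height_le_height_apply_of_strictMono H hH _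
    _ = H p.last := Order.height_nat _
    _ ≤ r := by exact_mod_cast hr _

lemma heightN_add_depthN_le_rankN (x : Q) : heightN x + depthN x ≤ rankN Q := by
  have : Nonempty Q := ⟨x⟩
  have h := Order.krullDim_eq_iSup_height_add_coheight_of_nonempty (α := Q)
  rw [← rankN_eq_krullDim, WithBot.coe_inj] at h
  have hx := le_iSup (fun a => height a + coheight a) x
  rw [← h, ← heightN_eq_height, ← depthN_eq_coheight] at hx
  exact_mod_cast hx

lemma LTSeries.length_le_heightN_add_depthN (p : LTSeries Q) (k : Fin (p.length + 1)) :
    p.length ≤ heightN (p k) + depthN (p k) := by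
  have hh : ((p.take k).length : ℕ∞) ≤ heightN (p k) := by
    rw [heightN_eq_height]; exact Order.length_le_height (RelSeries.last_take p k).le
  have hd : ((p.drop k).length : ℕ∞) ≤ depthN (p k) := by
    rw [depthN_eq_coheight]; exact Order.length_le_coheight (RelSeries.head_drop p k).ge
  simp only [RelSeries.take_length, RelSeries.drop_length, Nat.cast_le] at hh hd
  omega

end Rank

section Hat

variable {P : Type*} [PartialOrder P] [Finite P]

lemma heightN_toHat (x : P) : heightN (toHat x) = heightN x + 1 := by
  suffices (heightN (toHat x) : ℕ∞) = heightN x + 1 by exact_mod_cast this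
  simp [heightN_eq_height, toHat]

lemma depthN_toHat (x : P) : depthN (toHat x) = depthN x + 1 := by
  suffices (depthN (toHat x) : ℕ∞) = depthN x + 1 by exact_mod_cast this
  simp [depthN_eq_coheight, toHat]

lemma rankN_hat [Nonempty P] : rankN (Hat P) = rankN P + 2 := by
  suffices ((rankN (Hat P) : ℕ∞) : WithBot ℕ∞) = ((rankN P : ℕ∞) : WithBot ℕ∞) + 1 + 1 by
    exact_mod_cast this
  rw [rankN_eq_krullDim, rankN_eq_krullDim, Order.krullDim_withBot, Order.krullDim_WithTop]

end Hat

lemma IsChain.exists_ltSeries {α : Type*} [PartialOrder α] {s : Set α}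
    (hs : IsChain (· ≤ ·) s) (hfin : s.Finite) (hne : s.Nonempty) :
    ∃ p : LTSeries α, p.length + 1 = s.ncard ∧ Set.range p = s := by
  let := hs.linearOrder
  have := hfin.fintype
  obtain ⟨n, hn⟩ : ∃ n, Fintype.card s = n + 1 :=
    Nat.exists_eq_succ_of_ne_zero (Fintype.card_pos_iff.mpr hne.to_subtype).ne'
  let e := monoEquivOfFin s hn
  refine ⟨LTSeries.mk n (fun k => (e k : α)) fun a b hab => e.strictMono hab, ?_, ?_⟩
  · rw [← Nat.card_coe_set_eq, Nat.card_eq_fintype_card, hn]; rfl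
  · ext z
    exact ⟨by rintro ⟨k, rfl⟩; exact (e k).2, fun hz => ⟨e.symm ⟨z, hz⟩, by simp [LTSeries.mk]⟩⟩

lemma heightC_le_ncard_sub_one {P : Type*} [PartialOrder P] {C : Set P} {x : P}
    (hfin : C.Finite) (hx : x ∈ C) : heightC C x ≤ C.ncard - 1 := by
  have : {z ∈ C | z < x} ⊂ C := ⟨Set.sep_subset _ _, fun h => lt_irrefl x (h hx).2⟩
  have := Set.ncard_lt_ncard this hfin
  rw [heightC]
  omega

namespace IsCCD

variable {P : Type*} [PartialOrder P] {d : ℕ} {C : Fin d → Set P}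

lemma exists_mem (hC : IsCCD C) (x : P) : ∃ i, x ∈ C i :=
  Set.mem_iUnion.mp (hC.2.2 ▸ Set.mem_univ x)

noncomputable def chainHeight (hC : IsCCD C) (x : P) : ℕ :=
  heightC (C (hC.exists_mem x).choose) x

lemma chainHeight_le [Finite P] (hC : IsCCD C) (x : P) :
    hC.chainHeight x ≤ Finset.univ.sup (fun i => (C i).ncard - 1) :=
  (heightC_le_ncard_sub_one (Set.toFinite _) (hC.exists_mem x).choose_spec).trans
    (Finset.le_sup (f := fun i => (C i).ncard - 1) (Finset.mem_univ _))

lemma ncard_sub_one_le_rankN [Finite P] (hC : IsCCD C) (i : Fin d) :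
    (C i).ncard - 1 ≤ rankN P := by
  rcases (C i).eq_empty_or_nonempty with hempty | hne
  · simp [hempty]
  obtain ⟨p, hp, -⟩ := (hC.1 i).1.exists_ltSeries (Set.toFinite _) hne
  have := LTSeries.length_le_rankN p
  omega

end IsCCD

lemma RegularHP.strictMono_chainHeight {P : Type*} [PartialOrder P] (hreg : RegularHP P)
    {d : ℕ} {C : Fin d → Set P} (hC : IsCCD C) : StrictMono hC.chainHeight :=
  fun x y hxy => hreg.2 d C hC _ _ x y (hC.exists_mem x).choose_spec
    (hC.exists_mem y).choose_spec hxy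

/-- If `I(P)` is regular hyper-planar with canonical chain decomposition
`C₁ ∪ … ∪ C_d`, then (b) `rank P = max ℓ(Cᵢ)` and (c) for every `i` with
`ℓ(Cᵢ) = rank P` and every `x ∈ Cᵢ`, `height(x) + depth(x) = rank (Hat P)`,
where height and depth are computed in `Hat P`. -/
theorem rank_and_height_add_depth_of_regular (P : Type*) [Fintype P]
    [PartialOrder P] (hreg : RegularHP P) (d : ℕ) (C : Fin d → Set P)
    (hC : IsCCD C) :
    rankN P = Finset.univ.sup (fun i => (C i).ncard - 1) ∧
      ∀ i : Fin d, (C i).ncard - 1 = rankN P → ∀ x ∈ C i,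
        heightN (toHat x) + depthN (toHat x) = rankN (Hat P) := by
  refine ⟨le_antisymm (rankN_le_of_strictMono _ (hreg.strictMono_chainHeight hC)
    hC.chainHeight_le) (Finset.sup_le fun i _ => hC.ncard_sub_one_le_rankN i), ?_⟩
  intro i hi x hx
  have : Nonempty P := ⟨x⟩
  obtain ⟨p, hp, hrange⟩ := (hC.1 i).1.exists_ltSeries (Set.toFinite _) ⟨x, hx⟩
  obtain ⟨k, rfl⟩ := hrange.symm ▸ hx
  have hle := p.length_le_heightN_add_depthN k
  have hge := heightN_add_depthN_le_rankN (p k)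
  rw [heightN_toHat, depthN_toHat, rankN_hat]
  omega
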